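/- arXiv:2605.26850 — 2 statements merged into one kernel-verified Lean document; each statement's English description precedes it below -/
import Mathlib

section
/- Let (Ω, μ) be a measure space and let p_A, p_B : Ω → ℝ be measurable, strictly positive μ-almost everywhere, with ∫ p_A dμ = ∫ p_B dμ = 1. Let Φ(u) = u log u − (1 + u) log(1 + u) for u > 0, and for a, b > 0 let D_Φ(a, b) = Φ(a) − Φ(b) − Φ′(b)(a − b) denote the associated Bregman divergence. Set F*(x) = log p_A(x) − log p_B(x). Then for every measurable F : Ω → ℝ, the logistic classification loss satisfies L(F) − L(F*) = ∫ D_Φ(e^{F*(x)}, e^{F(x)}) p_B(x) dμ(x) (as an identity in [0, ∞]). -/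
open MeasureTheory
open scoped ENNReal

/-- The logistic sigmoid `σ(u) = 1 / (1 + exp (-u))`. -/
noncomputable def sigmoid (u : ℝ) : ℝ := 1 / (1 + Real.exp (-u))

/-- The logistic classification loss
`L(F) = −∫ p_A log σ(F) dμ − ∫ p_B log (1 − σ(F)) dμ`, valued in `[0, ∞]`. -/
noncomputable def logisticLoss {Ω : Type*} [MeasurableSpace Ω] (μ : Measure Ω)
    (pA pB F : Ω → ℝ) : ℝ≥0∞ :=
  (∫⁻ x, ENNReal.ofReal (-(pA x * Real.log (sigmoid (F x)))) ∂μ)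
    + ∫⁻ x, ENNReal.ofReal (-(pB x * Real.log (1 - sigmoid (F x)))) ∂μ

/-- `Φ(u) = u log u − (1 + u) log (1 + u)`. -/
noncomputable def Phi (u : ℝ) : ℝ := u * Real.log u - (1 + u) * Real.log (1 + u)

/-- The derivative `Φ′(u) = log u − log (1 + u)` of `Φ` on `(0, ∞)`. -/
noncomputable def PhiDeriv (u : ℝ) : ℝ := Real.log u - Real.log (1 + u)

/-- The Bregman divergence `D_Φ(a, b) = Φ(a) − Φ(b) − Φ′(b) (a − b)` associated
with `Φ`, nonnegative for `a, b > 0` by strict convexity of `Φ`. -/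
noncomputable def bregmanPhi (a b : ℝ) : ℝ := Phi a - Phi b - PhiDeriv b * (a - b)

lemma one_add_exp_pos (u : ℝ) : (0:ℝ) < 1 + Real.exp u := by positivity

lemma log_sigmoid (u : ℝ) : Real.log (sigmoid u) = u - Real.log (1 + Real.exp u) := by
  have h : sigmoid u = Real.exp u / (1 + Real.exp u) := by
    unfold sigmoid
    rw [div_eq_div_iff (by positivity) (by positivity)]
    rw [Real.exp_neg]
    field_simp
    ring
  rw [h, Real.log_div (Real.exp_ne_zero u) (one_add_exp_pos u).ne', Real.log_exp]

lemma log_one_sub_sigmoid (u : ℝ) : Real.log (1 - sigmoid u) = - Real.log (1 + Real.exp u) := by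
  have h : 1 - sigmoid u = 1 / (1 + Real.exp u) := by
    unfold sigmoid
    rw [eq_div_iff (one_add_exp_pos u).ne']
    have h2 : (0:ℝ) < 1 + Real.exp (-u) := by positivity
    field_simp
    rw [Real.exp_neg]
    field_simp
    ring
  rw [h, Real.log_div one_ne_zero (one_add_exp_pos u).ne', Real.log_one]
  ring

lemma neg_log_sigmoid_nonneg (u : ℝ) : 0 ≤ -Real.log (sigmoid u) := by
  rw [log_sigmoid]
  have : u ≤ Real.log (1 + Real.exp u) := by
    nth_rewrite 1 [← Real.log_exp u]
    exact Real.log_le_log (Real.exp_pos u) (by linarith)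
  linarith

lemma neg_log_one_sub_sigmoid_nonneg (u : ℝ) : 0 ≤ -Real.log (1 - sigmoid u) := by
  rw [log_one_sub_sigmoid]
  have : (0:ℝ) ≤ Real.log (1 + Real.exp u) := Real.log_nonneg (by nlinarith [Real.exp_pos u])
  linarith

lemma bregmanPhi_nonneg {a b : ℝ} (ha : 0 < a) (hb : 0 < b) : 0 ≤ bregmanPhi a b := by
  have h1a : (0:ℝ) < 1 + a := by linarith
  have h1b : (0:ℝ) < 1 + b := by linarith
  have k1 : Real.log (b * (1+a)) - Real.log (a * (1+b)) ≤ b * (1+a) / (a * (1+b)) - 1 := by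
    rw [← Real.log_div (by positivity) (by positivity)]
    exact Real.log_le_sub_one_of_pos (by positivity)
  have k2 : Real.log (1+a) - Real.log (1+b) ≤ (1+a)/(1+b) - 1 := by
    rw [← Real.log_div (by positivity) (by positivity)]
    exact Real.log_le_sub_one_of_pos (by positivity)
  rw [Real.log_mul hb.ne' h1a.ne', Real.log_mul ha.ne' h1b.ne'] at k1
  have k1' : a * (Real.log b + Real.log (1+a) - (Real.log a + Real.log (1+b)))
      ≤ b * (1+a)/(1+b) - a := by
    have := mul_le_mul_of_nonneg_left k1 ha.le
    have e : a * (b * (1+a) / (a * (1+b)) - 1) = b * (1+a)/(1+b) - a := by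
      field_simp
    linarith [e ▸ this]
  have hq : b * (1+a)/(1+b) + (1+a)/(1+b) = 1 + a := by field_simp; ring
  unfold bregmanPhi Phi PhiDeriv
  nlinarith [k1', k2, hq]

lemma key_eq {A B : ℝ} (u : ℝ) (hA : 0 < A) (hB : 0 < B) :
    -(A * Real.log (sigmoid u)) + -(B * Real.log (1 - sigmoid u))
      = bregmanPhi (Real.exp (Real.log A - Real.log B)) (Real.exp u) * B
        + (-(A * Real.log (sigmoid (Real.log A - Real.log B)))
           + -(B * Real.log (1 - sigmoid (Real.log A - Real.log B)))) := by
  rw [log_sigmoid, log_one_sub_sigmoid, log_sigmoid, log_one_sub_sigmoid]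
  rw [Real.exp_sub, Real.exp_log hA, Real.exp_log hB]
  unfold bregmanPhi Phi PhiDeriv
  rw [Real.log_exp, Real.log_div hA.ne' hB.ne']
  set c := Real.log (1 + A / B) with hc
  set d := Real.log (1 + Real.exp u) with hd
  field_simp
  ring

lemma measurable_sigmoid : Measurable sigmoid := by
  unfold sigmoid
  exact (measurable_const.div ((measurable_const.add (Real.measurable_exp.comp measurable_neg))))

/-- The excess logistic loss over the optimal classifier
`F*(x) = log p_A(x) − log p_B(x)` is the `p_B`-weighted integral of the Bregman
divergence `D_Φ(e^{F*}, e^{F})`, as an identity in `[0, ∞]`: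
`L(F) = ∫ D_Φ(e^{F*(x)}, e^{F(x)}) p_B(x) dμ(x) + L(F*)`. -/
theorem logisticLoss_sub_optimal_eq_bregman
    {Ω : Type*} [MeasurableSpace Ω] (μ : Measure Ω)
    (pA pB : Ω → ℝ) (hpA : Measurable pA) (hpB : Measurable pB)
    (hpApos : ∀ᵐ x ∂μ, 0 < pA x) (hpBpos : ∀ᵐ x ∂μ, 0 < pB x)
    (hpAint : ∫ x, pA x ∂μ = 1) (hpBint : ∫ x, pB x ∂μ = 1)
    (F : Ω → ℝ) (hF : Measurable F) :
    logisticLoss μ pA pB F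
      = (∫⁻ x, ENNReal.ofReal
            (bregmanPhi (Real.exp (Real.log (pA x) - Real.log (pB x)))
              (Real.exp (F x)) * pB x) ∂μ)
        + logisticLoss μ pA pB (fun x => Real.log (pA x) - Real.log (pB x)) := by
  have hFs : Measurable (fun x => Real.log (pA x) - Real.log (pB x)) :=
    (Real.measurable_log.comp hpA).sub (Real.measurable_log.comp hpB)
  have m1 : Measurable fun x => ENNReal.ofReal (-(pA x * Real.log (sigmoid (F x)))) :=
    ((hpA.mul (Real.measurable_log.comp (measurable_sigmoid.comp hF))).neg).ennreal_ofReal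
  have m2 : Measurable fun x =>
      ENNReal.ofReal (-(pA x * Real.log (sigmoid (Real.log (pA x) - Real.log (pB x))))) :=
    ((hpA.mul (Real.measurable_log.comp (measurable_sigmoid.comp hFs))).neg).ennreal_ofReal
  have mD : Measurable fun x => ENNReal.ofReal
      (bregmanPhi (Real.exp (Real.log (pA x) - Real.log (pB x))) (Real.exp (F x)) * pB x) := by
    apply Measurable.ennreal_ofReal
    apply Measurable.mul _ hpB
    unfold bregmanPhi Phi PhiDeriv
    have hea : Measurable fun x => Real.exp (Real.log (pA x) - Real.log (pB x)) :=
      Real.measurable_exp.comp hFs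
    have heb : Measurable fun x => Real.exp (F x) := Real.measurable_exp.comp hF
    refine (((hea.mul (Real.measurable_log.comp hea)).sub
      ((measurable_const.add hea).mul
        (Real.measurable_log.comp (measurable_const.add hea)))).sub
      ((heb.mul (Real.measurable_log.comp heb)).sub
        ((measurable_const.add heb).mul
          (Real.measurable_log.comp (measurable_const.add heb))))).sub
      (((Real.measurable_log.comp heb).sub
        (Real.measurable_log.comp (measurable_const.add heb))).mul (hea.sub heb))
  unfold logisticLoss
  rw [← lintegral_add_left m1, ← lintegral_add_left m2, ← lintegral_add_left mD]
  refine lintegral_congr_ae ?_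
  filter_upwards [hpApos, hpBpos] with x hA hB
  have nn1 : 0 ≤ -(pA x * Real.log (sigmoid (F x))) := by
    have := mul_nonneg hA.le (neg_log_sigmoid_nonneg (F x)); linarith
  have nn2 : 0 ≤ -(pB x * Real.log (1 - sigmoid (F x))) := by
    have := mul_nonneg hB.le (neg_log_one_sub_sigmoid_nonneg (F x)); linarith
  have nng1 : 0 ≤ -(pA x * Real.log (sigmoid (Real.log (pA x) - Real.log (pB x)))) := by
    have := mul_nonneg hA.le (neg_log_sigmoid_nonneg (Real.log (pA x) - Real.log (pB x))); linarith
  have nng2 : 0 ≤ -(pB x * Real.log (1 - sigmoid (Real.log (pA x) - Real.log (pB x)))) := by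
    have := mul_nonneg hB.le
      (neg_log_one_sub_sigmoid_nonneg (Real.log (pA x) - Real.log (pB x))); linarith
  have nnD : 0 ≤ bregmanPhi (Real.exp (Real.log (pA x) - Real.log (pB x)))
      (Real.exp (F x)) * pB x :=
    mul_nonneg (bregmanPhi_nonneg (Real.exp_pos _) (Real.exp_pos _)) hB.le
  rw [← ENNReal.ofReal_add nn1 nn2, ← ENNReal.ofReal_add nng1 nng2,
    ← ENNReal.ofReal_add nnD (by linarith)]
  exact congrArg ENNReal.ofReal (key_eq (F x) hA hB)
end

section
/- (Population version of non-parametric consistency of Spatiotemporal Noise-Contrastive Estimation.) Let (Ω, μ) be a σ-finite measure space. Let p_d, p_θ : Ω → ℝ be measurable, strictly positive everywhere, with ∫ p_d dμ = ∫ p_θ dμ = 1. Let p_n : Ω × Ω → ℝ be measurable, strictly positive everywhere, with ∫ p_n(ω, ω′) dμ(ω′) = 1 for every ω ∈ Ω. On the product space (Ω × Ω, μ ⊗ μ), define the class densities p_A(ω, ω′) = p_d(ω) p_n(ω, ω′) and p_B(ω, ω′) = p_d(ω′) p_n(ω′, ω), and define the model classifier F_θ(ω, ω′) = log p_θ(ω)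 − log p_θ(ω′) + log p_n(ω, ω′) − log p_n(ω′, ω). If the logistic classification loss satisfies L(F_θ) ≤ L(F) for every measurable F : Ω × Ω → ℝ (i.e., F_θ is a population minimizer), then p_θ = p_d μ-almost everywhere. -/
open MeasureTheory
open scoped ENNReal

/-! The pointwise loss `-a log σ(u) - b log (1 - σ(u))` with `a, b > 0` is uniquely minimised at
the Bayes classifier `u = log a - log b`, where it is at most `a + b`. So the loss of the Bayes
classifier `log p_A - log p_B` is finite, and any classifier with no larger loss agrees with it
almost everywhere. Here `F_θ - (log p_A - log p_B) = r(ω) - r(ω′)` with `r = log p_θ - log p_d`;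
hence `r` is a.e. a constant `c`, `p_θ = e^c p_d` a.e., and normalisation forces `c = 0`. -/

lemma sigmoid_eq_real_sigmoid : sigmoid = Real.sigmoid := by
  funext u
  rw [sigmoid, Real.sigmoid_def, one_div]

namespace Real

lemma sigmoid_log_sub_log {a b : ℝ} (ha : 0 < a) (hb : 0 < b) :
    sigmoid (log a - log b) = a / (a + b) := by
  rw [sigmoid_def, neg_sub, ← log_div hb.ne' ha.ne', exp_log (div_pos hb ha)]
  field_simp

lemma mul_log_sub_log_lt {a c : ℝ} (ha : 0 < a) (hc : 0 < c) (hca : c ≠ a) :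
    a * (log c - log a) < c - a := by
  have h := log_lt_sub_one_of_pos (div_pos hc ha) (by rwa [ne_eq, div_eq_one_iff_eq ha.ne'])
  rw [log_div hc.ne' ha.ne'] at h
  have := mul_lt_mul_of_pos_left h ha
  rwa [mul_sub_one, mul_div_cancel₀ c ha.ne'] at this

lemma neg_mul_log_sigmoid_nonneg {a : ℝ} (ha : 0 ≤ a) (u : ℝ) :
    0 ≤ -(a * log (sigmoid u)) :=
  neg_nonneg.mpr (mul_nonpos_of_nonneg_of_nonpos ha
    (log_nonpos (sigmoid_nonneg u) (sigmoid_le_one u)))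

lemma neg_mul_log_one_sub_sigmoid_nonneg {a : ℝ} (ha : 0 ≤ a) (u : ℝ) :
    0 ≤ -(a * log (1 - sigmoid u)) := by
  rw [← sigmoid_neg]
  exact neg_mul_log_sigmoid_nonneg ha (-u)

end Real

section Pointwise

open Real hiding sigmoid

noncomputable def pointwiseLogisticLoss (a b u : ℝ) : ℝ :=
  -(a * log (Real.sigmoid u)) + -(b * log (1 - Real.sigmoid u))

lemma pointwiseLogisticLoss_nonneg {a b : ℝ} (ha : 0 ≤ a) (hb : 0 ≤ b) (u : ℝ) :
    0 ≤ pointwiseLogisticLoss a b u :=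
  add_nonneg (neg_mul_log_sigmoid_nonneg ha u) (neg_mul_log_one_sub_sigmoid_nonneg hb u)

/-- Gibbs' inequality for two outcomes: `log x < x - 1` at `x = (a + b) σ(u) / a` and at
`x = (a + b) (1 - σ(u)) / b`, weighted by `a` and `b`, sums to the claim. -/
lemma pointwiseLogisticLoss_log_sub_log_lt {a b u : ℝ} (ha : 0 < a) (hb : 0 < b)
    (hu : u ≠ log a - log b) :
    pointwiseLogisticLoss a b (log a - log b) < pointwiseLogisticLoss a b u := by
  have hab : 0 < a + b := add_pos ha hb
  have hq₀ := sigmoid_pos u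
  have hq₁ := sub_pos.mpr (sigmoid_lt_one u)
  have hq : (a + b) * Real.sigmoid u ≠ a := by
    intro h
    apply hu
    rw [← sigmoid_inj, sigmoid_log_sub_log ha hb, eq_div_iff hab.ne', mul_comm, h]
  have hA := mul_log_sub_log_lt ha (mul_pos hab hq₀) hq
  have hB := mul_log_sub_log_lt hb (mul_pos hab hq₁) (by contrapose! hq; linarith)
  have hσ : 1 - Real.sigmoid (log a - log b) = b / (a + b) := by
    rw [sigmoid_log_sub_log ha hb]
    field_simp
    ring
  unfold pointwiseLogisticLoss
  rw [hσ, sigmoid_log_sub_log ha hb, log_div ha.ne' hab.ne', log_div hb.ne' hab.ne']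
  rw [log_mul hab.ne' hq₀.ne'] at hA
  rw [log_mul hab.ne' hq₁.ne'] at hB
  nlinarith

lemma pointwiseLogisticLoss_log_sub_log_le {a b : ℝ} (ha : 0 < a) (hb : 0 < b) (u : ℝ) :
    pointwiseLogisticLoss a b (log a - log b) ≤ pointwiseLogisticLoss a b u := by
  rcases eq_or_ne u (log a - log b) with rfl | hu
  · exact le_rfl
  · exact (pointwiseLogisticLoss_log_sub_log_lt ha hb hu).le

lemma eq_log_sub_log_of_pointwiseLogisticLoss_le {a b u : ℝ} (ha : 0 < a) (hb : 0 < b)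
    (h : pointwiseLogisticLoss a b u ≤ pointwiseLogisticLoss a b (log a - log b)) :
    u = log a - log b := by
  by_contra hu
  exact (pointwiseLogisticLoss_log_sub_log_lt ha hb hu).not_ge h

lemma pointwiseLogisticLoss_log_sub_log_le_add {a b : ℝ} (ha : 0 < a) (hb : 0 < b) :
    pointwiseLogisticLoss a b (log a - log b) ≤ a + b := by
  have h₀ : pointwiseLogisticLoss a b 0 = (a + b) * log 2 := by
    rw [pointwiseLogisticLoss, sigmoid_zero, show (1 : ℝ) - 2⁻¹ = 2⁻¹ by norm_num, log_inv]
    ring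
  have := pointwiseLogisticLoss_log_sub_log_le ha hb 0
  nlinarith [log_two_lt_d9]

end Pointwise

section Measure

variable {α : Type*} [MeasurableSpace α] {μ : Measure α}

lemma logisticLoss_eq_lintegral {pA pB F : α → ℝ} (hA : Measurable pA) (hA₀ : ∀ x, 0 ≤ pA x)
    (hB₀ : ∀ x, 0 ≤ pB x) (hF : Measurable F) :
    logisticLoss μ pA pB F
      = ∫⁻ x, ENNReal.ofReal (pointwiseLogisticLoss (pA x) (pB x) (F x)) ∂μ := by
  have hσ : Measurable Real.sigmoid := continuous_sigmoid.measurable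
  rw [logisticLoss, sigmoid_eq_real_sigmoid, ← lintegral_add_left (by fun_prop)]
  refine lintegral_congr fun x => ?_
  rw [pointwiseLogisticLoss, ENNReal.ofReal_add (Real.neg_mul_log_sigmoid_nonneg (hA₀ x) _)
    (Real.neg_mul_log_one_sub_sigmoid_nonneg (hB₀ x) _)]

lemma ae_eq_log_sub_log_of_logisticLoss_le {pA pB F : α → ℝ} (hA : Measurable pA)
    (hB : Measurable pB) (hA₀ : ∀ x, 0 < pA x) (hB₀ : ∀ x, 0 < pB x)
    (hA_fin : ∫⁻ x, ENNReal.ofReal (pA x) ∂μ ≠ ∞) (hB_fin : ∫⁻ x, ENNReal.ofReal (pB x) ∂μ ≠ ∞)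
    (hF : Measurable F)
    (hle : logisticLoss μ pA pB F
      ≤ logisticLoss μ pA pB (fun x => Real.log (pA x) - Real.log (pB x))) :
    F =ᵐ[μ] fun x => Real.log (pA x) - Real.log (pB x) := by
  have hσ : Measurable Real.sigmoid := continuous_sigmoid.measurable
  rw [logisticLoss_eq_lintegral hA (fun x => (hA₀ x).le) (fun x => (hB₀ x).le) hF,
    logisticLoss_eq_lintegral hA (fun x => (hA₀ x).le) (fun x => (hB₀ x).le) (by fun_prop)] at hle
  have h_fin : ∫⁻ x, ENNReal.ofReal
      (pointwiseLogisticLoss (pA x) (pB x) (Real.log (pA x) - Real.log (pB x))) ∂μ ≠ ∞ := by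
    refine ne_top_of_le_ne_top (ENNReal.add_ne_top.mpr ⟨hA_fin, hB_fin⟩) ?_
    rw [← lintegral_add_left (by fun_prop)]
    refine lintegral_mono fun x => ?_
    rw [← ENNReal.ofReal_add (hA₀ x).le (hB₀ x).le]
    exact ENNReal.ofReal_le_ofReal (pointwiseLogisticLoss_log_sub_log_le_add (hA₀ x) (hB₀ x))
  have h_pt : ∀ x, pointwiseLogisticLoss (pA x) (pB x) (Real.log (pA x) - Real.log (pB x))
      ≤ pointwiseLogisticLoss (pA x) (pB x) (F x) := fun x =>
    pointwiseLogisticLoss_log_sub_log_le (hA₀ x) (hB₀ x) (F x)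
  have h_ae := ae_eq_of_ae_le_of_lintegral_le
    (ae_of_all _ fun x => ENNReal.ofReal_le_ofReal (h_pt x)) h_fin
    (by unfold pointwiseLogisticLoss; fun_prop) hle
  filter_upwards [h_ae] with x hx
  refine eq_log_sub_log_of_pointwiseLogisticLoss_le (hA₀ x) (hB₀ x) ?_
  exact (ENNReal.ofReal_le_ofReal_iff
    (pointwiseLogisticLoss_nonneg (hA₀ x).le (hB₀ x).le _)).mp hx.ge

lemma lintegral_ofReal_eq_one_of_integral_eq_one {f : α → ℝ} (hf : 0 ≤ᵐ[μ] f)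
    (h : ∫ x, f x ∂μ = 1) : ∫⁻ x, ENNReal.ofReal (f x) ∂μ = 1 := by
  rw [← ofReal_integral_eq_lintegral_ofReal (.of_integral_ne_zero (h ▸ one_ne_zero)) hf, h,
    ENNReal.ofReal_one]

lemma lintegral_ofReal_mul_kernel_eq_one {β : Type*} [MeasurableSpace β] {ν : Measure β}
    [SFinite ν] {p : α → ℝ} {k : α × β → ℝ} (hp : Measurable p) (hk : Measurable k)
    (hp₀ : ∀ x, 0 ≤ p x) (hp₁ : ∫⁻ x, ENNReal.ofReal (p x) ∂μ = 1)
    (hk₁ : ∀ x, ∫⁻ y, ENNReal.ofReal (k (x, y)) ∂ν = 1) :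
    ∫⁻ z, ENNReal.ofReal (p z.1 * k (z.1, z.2)) ∂μ.prod ν = 1 := by
  rw [lintegral_prod _ (by fun_prop)]
  simp_rw [ENNReal.ofReal_mul (hp₀ _)]
  rw [← hp₁]
  refine lintegral_congr fun x => ?_
  rw [lintegral_const_mul _ (by fun_prop), hk₁ x, mul_one]

lemma exists_ae_eq_const_of_ae_prod_eq {β : Type*} [Nonempty β] [SFinite μ] {f : α → β}
    (h : ∀ᵐ z ∂μ.prod μ, f z.1 = f z.2) : ∃ c, ∀ᵐ x ∂μ, f x = c := by
  rcases eq_zero_or_neZero μ with rfl | hμ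
  · exact ⟨Classical.arbitrary β, by simp⟩
  obtain ⟨x₀, hx₀⟩ := (Measure.ae_ae_of_ae_prod h).exists
  exact ⟨f x₀, by filter_upwards [hx₀] with x hx using hx.symm⟩

lemma ae_eq_of_log_sub_log_ae_eq_const {p q : α → ℝ} {c : ℝ} (hp : ∀ x, 0 < p x)
    (hq : ∀ x, 0 < q x) (h : ∀ᵐ x ∂μ, Real.log (p x) - Real.log (q x) = c)
    (hpq : ∫ x, p x ∂μ = ∫ x, q x ∂μ) (hq₀ : ∫ x, q x ∂μ ≠ 0) : p =ᵐ[μ] q := by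
  have h_mul : ∀ᵐ x ∂μ, p x = Real.exp c * q x := by
    filter_upwards [h] with x hx
    rw [← Real.exp_log (hp x), ← Real.exp_log (hq x), ← Real.exp_add, ← hx, sub_add_cancel]
  have hc : Real.exp c = 1 := by
    rw [integral_congr_ae h_mul, integral_const_mul] at hpq
    exact (mul_eq_right₀ hq₀).mp hpq
  filter_upwards [h_mul] with x hx
  rw [hx, hc, one_mul]

end Measure

/-- Population version of non-parametric consistency of Spatiotemporal
Noise-Contrastive Estimation: if the model classifier
`F_θ(ω, ω′) = log p_θ(ω) − log p_θ(ω′) + log p_n(ω, ω′) − log p_n(ω′, ω)`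
minimizes the logistic loss for classifying
`p_A(ω, ω′) = p_d(ω) p_n(ω, ω′)` against `p_B(ω, ω′) = p_d(ω′) p_n(ω′, ω)`
over all measurable classifiers, then `p_θ = p_d` μ-almost everywhere. -/
theorem stNCE_nonparametric_consistency
    {Ω : Type*} [MeasurableSpace Ω] (μ : Measure Ω) [SigmaFinite μ]
    (pd pθ : Ω → ℝ) (hpd : Measurable pd) (hpθ : Measurable pθ)
    (hpdpos : ∀ x, 0 < pd x) (hpθpos : ∀ x, 0 < pθ x)
    (hpdint : ∫ x, pd x ∂μ = 1) (hpθint : ∫ x, pθ x ∂μ = 1)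
    (pn : Ω × Ω → ℝ) (hpn : Measurable pn)
    (hpnpos : ∀ z, 0 < pn z)
    (hpnint : ∀ ω, ∫ ω', pn (ω, ω') ∂μ = 1)
    (hopt : ∀ F : Ω × Ω → ℝ, Measurable F →
      logisticLoss (μ.prod μ)
          (fun z => pd z.1 * pn (z.1, z.2))
          (fun z => pd z.2 * pn (z.2, z.1))
          (fun z => Real.log (pθ z.1) - Real.log (pθ z.2)
            + Real.log (pn (z.1, z.2)) - Real.log (pn (z.2, z.1)))
        ≤ logisticLoss (μ.prod μ)
            (fun z => pd z.1 * pn (z.1, z.2))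
            (fun z => pd z.2 * pn (z.2, z.1)) F) :
    pθ =ᵐ[μ] pd := by
  set pA : Ω × Ω → ℝ := fun z => pd z.1 * pn (z.1, z.2)
  set pB : Ω × Ω → ℝ := fun z => pd z.2 * pn (z.2, z.1)
  have hA₁ : ∫⁻ z, ENNReal.ofReal (pA z) ∂μ.prod μ = 1 :=
    lintegral_ofReal_mul_kernel_eq_one hpd hpn (fun x => (hpdpos x).le)
      (lintegral_ofReal_eq_one_of_integral_eq_one (ae_of_all _ fun x => (hpdpos x).le) hpdint)
      fun x => lintegral_ofReal_eq_one_of_integral_eq_one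
        (ae_of_all _ fun y => (hpnpos _).le) (hpnint x)
  have hB₁ : ∫⁻ z, ENNReal.ofReal (pB z) ∂μ.prod μ = 1 :=
    (lintegral_prod_swap fun z => ENNReal.ofReal (pA z)).trans hA₁
  have hApos : ∀ z, 0 < pA z := fun z => mul_pos (hpdpos _) (hpnpos _)
  have hBpos : ∀ z, 0 < pB z := fun z => mul_pos (hpdpos _) (hpnpos _)
  have h_bayes := ae_eq_log_sub_log_of_logisticLoss_le (by fun_prop) (by fun_prop) hApos hBpos
    (hA₁ ▸ ENNReal.one_ne_top) (hB₁ ▸ ENNReal.one_ne_top) (by fun_prop) (hopt _ (by fun_prop))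
  have h_ratio : ∀ᵐ z ∂μ.prod μ, Real.log (pθ z.1) - Real.log (pd z.1)
      = Real.log (pθ z.2) - Real.log (pd z.2) := by
    filter_upwards [h_bayes] with z hz
    simp only [pA, pB] at hz
    rw [Real.log_mul (hpdpos _).ne' (hpnpos _).ne', Real.log_mul (hpdpos _).ne' (hpnpos _).ne']
      at hz
    linarith
  obtain ⟨c, hc⟩ := exists_ae_eq_const_of_ae_prod_eq
    (f := fun x => Real.log (pθ x) - Real.log (pd x)) h_ratio
  exact ae_eq_of_log_sub_log_ae_eq_const hpθpos hpdpos hc (hpθint.trans hpdint.symm)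
    (hpdint ▸ one_ne_zero)
end
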